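/- arXiv:1701.06688 — 2 statements merged into one kernel-verified Lean document; each statement's English description precedes it below -/
import Mathlib

section
/- Let f(x) = x ln x (extended by 0 at 0) and let (t_i) be a probability vector. For two probability vectors r = (r_1,…,r_n) and s = (s_1,…,s_n) sorted in increasing order, if for all t in a neighborhood of 0, Σ_i f(t·r_i + (1-t)/n) = Σ_i f(t·s_i + (1-t)/n), then r = s. -/
/-!
Since `t rᵢ + (1 - t)/n = u + t bᵢ` with `u = 1/n > 0` and `bᵢ = rᵢ - u`, the hypothesis is an
identity near `t = 0` between functions `t ↦ ∑ᵢ f(u + t bᵢ)`. As `f''(x) = 1/x`, differentiating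
`k + 2` times and evaluating at `0` gives `∑ᵢ bᵢ^(k+2) / u^(k+1)` up to a nonzero factor, so the
shifted vectors have the same power sums of every order `≥ 2`; the first power sums agree because
both vectors sum to `1`. Newton's identities turn equal power sums into equal elementary
symmetric functions, hence equal multisets of entries, and two sorted vectors with the same
entries coincide.
-/

open Real Filter Finset Topology

section Derivatives

variable (u a t : ℝ)

theorem hasDerivAt_const_add_mul_const : HasDerivAt (fun t => u + t * a) a t := by
  simpa using (hasDerivAt_mul_const a).const_add u

theorem hasDerivAt_affine_mul_log (h : u + t * a ≠ 0) :
    HasDerivAt (fun t => (u + t * a) * log (u + t * a)) (a * log (u + t * a) + a) t := by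
  have hlin := hasDerivAt_const_add_mul_const u a t
  refine (hlin.mul (hlin.log h)).congr_deriv ?_
  rw [mul_div_cancel₀ _ h]

theorem hasDerivAt_const_mul_log_affine_add_const (h : u + t * a ≠ 0) :
    HasDerivAt (fun t => a * log (u + t * a) + a) (a ^ 2 / (u + t * a)) t := by
  have hlin := hasDerivAt_const_add_mul_const u a t
  refine (((hlin.log h).const_mul a).add_const a).congr_deriv ?_
  field_simp

theorem hasDerivAt_pow_div_affine_pow (k : ℕ) (h : u + t * a ≠ 0) :
    HasDerivAt (fun t => a ^ (k + 2) / (u + t * a) ^ (k + 1))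
      (-((k : ℝ) + 1) * (a ^ (k + 3) / (u + t * a) ^ (k + 2))) t := by
  have hlin := hasDerivAt_const_add_mul_const u a t
  refine ((hasDerivAt_const t (a ^ (k + 2))).div (hlin.fun_pow (k + 1))
    (pow_ne_zero _ h)).congr_deriv ?_
  field_simp
  push_cast
  ring

end Derivatives

section PowerSums

variable {ι : Type*} [Fintype ι] {u : ℝ} {b c : ι → ℝ}

theorem eventually_forall_add_mul_pos (hu : 0 < u) (b : ι → ℝ) :
    ∀ᶠ t in 𝓝 (0 : ℝ), ∀ i, 0 < u + t * b i := by
  refine eventually_all.mpr fun i => ?_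
  have hcont : Tendsto (fun t : ℝ => u + t * b i) (𝓝 0) (𝓝 u) := by
    simpa using ((continuous_mul_const (b i)).const_add u).tendsto 0
  exact hcont.eventually (eventually_gt_nhds hu)

theorem eventuallyEq_sum_deriv_of_eventuallyEq_sum (hu : 0 < u) {φ φ' : ℝ → ℝ → ℝ}
    (hφ : ∀ a t, u + t * a ≠ 0 → HasDerivAt (φ a) (φ' a t) t)
    (h : (fun t => ∑ i, φ (b i) t) =ᶠ[𝓝 0] fun t => ∑ i, φ (c i) t) :
    (fun t => ∑ i, φ' (b i) t) =ᶠ[𝓝 0] fun t => ∑ i, φ' (c i) t := by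
  filter_upwards [h.deriv, eventually_forall_add_mul_pos hu b, eventually_forall_add_mul_pos hu c]
    with t ht hb hc
  rw [← (HasDerivAt.fun_sum fun i _ => hφ (b i) t (hb i).ne').deriv,
    ← (HasDerivAt.fun_sum fun i _ => hφ (c i) t (hc i).ne').deriv, ht]

theorem sum_pow_div_eventuallyEq_of_sum_mul_log (hu : 0 < u)
    (h : (fun t => ∑ i, (u + t * b i) * log (u + t * b i)) =ᶠ[𝓝 0]
      fun t => ∑ i, (u + t * c i) * log (u + t * c i)) (k : ℕ) :
    (fun t => ∑ i, b i ^ (k + 2) / (u + t * b i) ^ (k + 1)) =ᶠ[𝓝 0]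
      fun t => ∑ i, c i ^ (k + 2) / (u + t * c i) ^ (k + 1) := by
  induction k with
  | zero =>
    have h' := eventuallyEq_sum_deriv_of_eventuallyEq_sum hu (hasDerivAt_affine_mul_log u) h
    simpa using eventuallyEq_sum_deriv_of_eventuallyEq_sum hu
      (hasDerivAt_const_mul_log_affine_add_const u) h'
  | succ k ih =>
    have hk : -((k : ℝ) + 1) ≠ 0 := neg_ne_zero.mpr k.cast_add_one_ne_zero
    filter_upwards [eventuallyEq_sum_deriv_of_eventuallyEq_sum hu
      (fun a t => hasDerivAt_pow_div_affine_pow u a t k) ih] with t ht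
    simp only [← mul_sum] at ht
    exact mul_left_cancel₀ hk ht

theorem sum_pow_add_two_eq_of_sum_mul_log (hu : 0 < u)
    (h : (fun t => ∑ i, (u + t * b i) * log (u + t * b i)) =ᶠ[𝓝 0]
      fun t => ∑ i, (u + t * c i) * log (u + t * c i)) (k : ℕ) :
    ∑ i, b i ^ (k + 2) = ∑ i, c i ^ (k + 2) := by
  have h0 := (sum_pow_div_eventuallyEq_of_sum_mul_log hu h k).eq_of_nhds
  simp only [zero_mul, add_zero, ← sum_div] at h0
  exact (div_left_inj' (pow_ne_zero _ hu.ne')).mp h0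

end PowerSums

section SymmetricFunctions

variable {ι R : Type*} [Fintype ι] [CommRing R] [IsDomain R] [CharZero R] {b c : ι → R}

theorem esymm_map_univ_eq_of_sum_pow_eq (hp : ∀ k, 1 ≤ k → ∑ i, b i ^ k = ∑ i, c i ^ k)
    (k : ℕ) : (univ.val.map b).esymm k = (univ.val.map c).esymm k := by
  induction k using Nat.strong_induction_on with
  | _ k ih =>
  rcases Nat.eq_zero_or_pos k with rfl | hk
  · simp [Multiset.esymm]
  have newton (x : ι → R) := congrArg (MvPolynomial.aeval x) (MvPolynomial.mul_esymm_eq_sum ι R k)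
  have hb := newton b
  have hc := newton c
  simp only [map_mul, map_sum, map_pow, map_neg, map_one, map_natCast,
    MvPolynomial.aeval_esymm_eq_multiset_esymm, MvPolynomial.psum, MvPolynomial.aeval_X] at hb hc
  refine mul_left_cancel₀ (Nat.cast_ne_zero.mpr hk.ne') ?_
  rw [hb, hc]
  refine congrArg _ (sum_congr rfl fun a ha => ?_)
  obtain ⟨hmem, hlt⟩ := mem_filter.mp ha
  rw [ih a.1 hlt, hp a.2 (by have := mem_antidiagonal.mp hmem; omega)]

theorem map_univ_eq_of_sum_pow_eq (hp : ∀ k, 1 ≤ k → ∑ i, b i ^ k = ∑ i, c i ^ k) :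
    univ.val.map b = univ.val.map c := by
  have hpoly : ((univ.val.map b).map fun a => Polynomial.X - Polynomial.C a).prod =
      ((univ.val.map c).map fun a => Polynomial.X - Polynomial.C a).prod := by
    simp only [Multiset.prod_X_sub_X_eq_sum_esymm, Multiset.card_map, card_val,
      esymm_map_univ_eq_of_sum_pow_eq hp]
  simpa only [Polynomial.roots_multiset_prod_X_sub_C] using congrArg Polynomial.roots hpoly

end SymmetricFunctions

theorem eq_of_monotone_of_map_univ_eq {α : Type*} [LinearOrder α] {n : ℕ} {b c : Fin n → α}
    (hb : Monotone b) (hc : Monotone c) (h : univ.val.map b = univ.val.map c) : b = c := by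
  rw [Fin.univ_val_map, Fin.univ_val_map, Multiset.coe_eq_coe] at h
  exact List.ofFn_injective
    (h.eq_of_sortedLE (List.sortedLE_ofFn_iff.mpr hb) (List.sortedLE_ofFn_iff.mpr hc))

open Real in
theorem sorted_spectra_unique_general (n : ℕ) (hn : 0 < n)
    (r s : Fin n → ℝ)
    (hr1 : ∑ i, r i = 1) (hs1 : ∑ i, s i = 1)
    (hrmono : Monotone r) (hsmono : Monotone s)
    (heq : ∀ᶠ t in nhds (0 : ℝ),
      ∑ i, (t * r i + (1 - t) / n) * log (t * r i + (1 - t) / n) =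
        ∑ i, (t * s i + (1 - t) / n) * log (t * s i + (1 - t) / n)) :
    r = s := by
  set u : ℝ := 1 / n
  have hu : 0 < u := by positivity
  have hshift (x t : ℝ) : t * x + (1 - t) / n = u + t * (x - u) := by ring
  have hpow : ∀ k, 1 ≤ k → ∑ i, (r i - u) ^ k = ∑ i, (s i - u) ^ k := by
    rintro (_ | _ | k) hk
    · omega
    · simp [sum_sub_distrib, hr1, hs1]
    · refine sum_pow_add_two_eq_of_sum_mul_log hu ?_ k
      filter_upwards [heq] with t ht
      simpa only [hshift] using ht
  have hshifted := eq_of_monotone_of_map_univ_eq (fun _ _ hij => sub_le_sub_right (hrmono hij) u)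
    (fun _ _ hij => sub_le_sub_right (hsmono hij) u) (map_univ_eq_of_sum_pow_eq hpow)
  funext i
  simpa using congrFun hshifted i

open Real in
/-- Let `f(x) = x ln x` (with `f(0) = 0`, as given by
`Real.log 0 = 0`). If two sorted probability vectors `r, s` of length `n`
satisfy `∑ᵢ f(t rᵢ + (1-t)/n) = ∑ᵢ f(t sᵢ + (1-t)/n)` for all `t` in a
neighborhood of `0`, then `r = s`. -/
theorem sorted_spectra_unique (n : ℕ) (hn : 0 < n)
    (r s : Fin n → ℝ)
    (hr0 : ∀ i, 0 ≤ r i) (hs0 : ∀ i, 0 ≤ s i)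
    (hr1 : ∑ i, r i = 1) (hs1 : ∑ i, s i = 1)
    (hrmono : Monotone r) (hsmono : Monotone s)
    (heq : ∀ᶠ t in nhds (0 : ℝ),
      ∑ i, (t * r i + (1 - t) / n) * log (t * r i + (1 - t) / n) =
        ∑ i, (t * s i + (1 - t) / n) * log (t * s i + (1 - t) / n)) :
    r = s :=
  sorted_spectra_unique_general n hn r s hr1 hs1 hrmono hsmono heq
end

section
/- Let A be a Hermitian matrix with spectral decomposition A = Σ_k λ_k E_k into orthogonal projections E_k, and let B be Hermitian. Then tr((E_k ∘ B) ∘ (E_ℓ ∘ B)) ≥ 0 for all k, ℓ, where X ∘ Y = (XY + YX)/2 is the Jordan product. -/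
/-- The Jordan product `X ∘ Y = (XY + YX)/2` of complex matrices. -/
noncomputable def jordanProd {n : ℕ} (X Y : Matrix (Fin n) (Fin n) ℂ) :
    Matrix (Fin n) (Fin n) ℂ :=
  (2 : ℂ)⁻¹ • (X * Y + Y * X)

open Matrix

lemma key {n : ℕ} (M : Matrix (Fin n) (Fin n) ℂ) :
    ∃ r : ℝ, 0 ≤ r ∧ (M * Mᴴ).trace = (r : ℂ) := by
  refine ⟨∑ i, ∑ j, Complex.normSq (M i j),
    Finset.sum_nonneg fun i _ => Finset.sum_nonneg fun j _ => Complex.normSq_nonneg _, ?_⟩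
  simp only [Matrix.trace, Matrix.diag, Matrix.mul_apply, Matrix.conjTranspose_apply]
  push_cast
  refine Finset.sum_congr rfl fun i _ => Finset.sum_congr rfl fun j _ => ?_
  rw [← Complex.mul_conj]
  rfl

lemma tr_jordan {n : ℕ} (X Y : Matrix (Fin n) (Fin n) ℂ) :
    (jordanProd X Y).trace = (X*Y).trace := by
  simp [jordanProd, Matrix.trace_smul, Matrix.trace_add, smul_eq_mul,
    Matrix.trace_mul_comm Y X]
  ring

/-- Let `E` and `E'` be Hermitian projections belonging to an
orthogonal family (so `E * E' = 0` if they are distinct members, and `E = E'`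
otherwise), and let `B` be Hermitian. With the Jordan product
`X ∘ Y = (XY + YX)/2`, the trace `tr((E ∘ B) ∘ (E' ∘ B))` is a nonnegative
real number. -/
theorem trace_jordan_nonneg {n : ℕ} (E E' B : Matrix (Fin n) (Fin n) ℂ)
    (hE : E.IsHermitian) (hE' : E'.IsHermitian) (hB : B.IsHermitian)
    (hEproj : E * E = E) (hE'proj : E' * E' = E')
    (horth : E * E' = 0 ∨ E = E') :
    (0 : ℝ) ≤ ((jordanProd (jordanProd E B) (jordanProd E' B)).trace).re ∧
      ((jordanProd (jordanProd E B) (jordanProd E' B)).trace).im = 0 := by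
  have hexp : (jordanProd (jordanProd E B) (jordanProd E' B)).trace
      = (4:ℂ)⁻¹ * ((E*B*(E'*B)).trace + (E*B*(B*E')).trace
          + (B*E*(E'*B)).trace + (B*E*(B*E')).trace) := by
    rw [tr_jordan]
    simp only [jordanProd, Matrix.smul_mul, Matrix.mul_smul, Matrix.add_mul,
      Matrix.mul_add, Matrix.trace_smul, Matrix.trace_add, smul_eq_mul]
    ring
  rcases horth with h0 | heq
  · -- orthogonal case
    have h0' : E' * E = 0 := by
      have := congrArg Matrix.conjTranspose h0
      simpa [Matrix.conjTranspose_mul, hE.eq, hE'.eq] using this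
    obtain ⟨r, hr, er⟩ := key (E*B*E')
    have hM : (E*B*E') * (E*B*E')ᴴ = E*(B*(E'*(B*E))) := by
      rw [Matrix.conjTranspose_mul, Matrix.conjTranspose_mul, hE.eq, hE'.eq, hB.eq]
      simp only [Matrix.mul_assoc]
      rw [← Matrix.mul_assoc E' E' , hE'proj]
    have t1 : (E*B*(E'*B)).trace = (r : ℂ) := by
      rw [← er, hM]
      simp only [Matrix.mul_assoc]
      rw [Matrix.trace_mul_comm E (B*(E'*B)), Matrix.trace_mul_comm E (B*(E'*(B*E)))]
      simp only [Matrix.mul_assoc]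
      rw [hEproj]
    have t2 : (E*B*(B*E')).trace = 0 := by
      simp only [Matrix.mul_assoc]
      rw [Matrix.trace_mul_comm E (B*(B*E'))]
      simp only [Matrix.mul_assoc, h0', Matrix.mul_zero, Matrix.trace_zero]
    have t3 : (B*E*(E'*B)).trace = 0 := by
      simp only [Matrix.mul_assoc]
      rw [← Matrix.mul_assoc E E', h0]
      simp
    have t4 : (B*E*(B*E')).trace = (r : ℂ) := by
      rw [← er, hM]
      rw [Matrix.trace_mul_comm (B*E) (B*E'), Matrix.trace_mul_comm E (B*(E'*(B*E)))]
      simp only [Matrix.mul_assoc]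
      rw [hEproj]
    rw [hexp, t1, t2, t3, t4]
    have : (4:ℂ)⁻¹ * ((r:ℂ) + 0 + 0 + (r:ℂ)) = ((r/2 : ℝ) : ℂ) := by
      push_cast; ring
    rw [this]
    constructor
    · simp; linarith
    · simp
  · -- E = E'
    subst heq
    obtain ⟨r1, hr1, e1⟩ := key (E*B*E)
    obtain ⟨r2, hr2, e2⟩ := key (E*B)
    have hM1 : (E*B*E) * (E*B*E)ᴴ = E*(B*(E*(B*E))) := by
      rw [Matrix.conjTranspose_mul, Matrix.conjTranspose_mul, hE.eq, hB.eq]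
      simp only [Matrix.mul_assoc]
      rw [← Matrix.mul_assoc E E (B*E), hEproj]
    have hM2 : (E*B) * (E*B)ᴴ = E*(B*(B*E)) := by
      rw [Matrix.conjTranspose_mul, hE.eq, hB.eq]
      simp only [Matrix.mul_assoc]
    have t1 : (E*B*(E*B)).trace = (r1 : ℂ) := by
      rw [← e1, hM1]
      simp only [Matrix.mul_assoc]
      rw [Matrix.trace_mul_comm E (B*(E*B)), Matrix.trace_mul_comm E (B*(E*(B*E)))]
      simp only [Matrix.mul_assoc]
      rw [hEproj]
    have t4 : (B*E*(B*E)).trace = (r1 : ℂ) := by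
      rw [← e1, hM1]
      rw [Matrix.trace_mul_comm (B*E) (B*E), Matrix.trace_mul_comm E (B*(E*(B*E)))]
      simp only [Matrix.mul_assoc]
      rw [hEproj]
    have t2 : (E*B*(B*E)).trace = (r2 : ℂ) := by
      rw [← e2, hM2]
      simp only [Matrix.mul_assoc]
    have t3 : (B*E*(E*B)).trace = (r2 : ℂ) := by
      rw [← e2, hM2]
      simp only [Matrix.mul_assoc]
      rw [← Matrix.mul_assoc E E B, hEproj]
      rw [Matrix.trace_mul_comm B (E*B), Matrix.trace_mul_comm E (B*(B*E))]
      simp only [Matrix.mul_assoc]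
      rw [hEproj, Matrix.trace_mul_comm E (B*B)]
      simp only [Matrix.mul_assoc]
    rw [hexp, t1, t2, t3, t4]
    have : (4:ℂ)⁻¹ * ((r1:ℂ) + (r2:ℂ) + (r2:ℂ) + (r1:ℂ)) = (((r1+r2)/2 : ℝ) : ℂ) := by
      push_cast; ring
    rw [this]
    constructor
    · simp; linarith
    · simp
end
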